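/- The constant term in x of (4t + (5t−1)x)/(2t + (5t−1)x + 2tx²), viewed as a formal power series in t with coefficients Laurent series in x, equals 1. -/

import Mathlib

/-!
Expanding the inverse of the denominator `−x + (2 + 5x + 2x²)t` as a geometric series in `t`,
the coefficient of `t⁰` is `1` and that of `t^(n+1)` is the Laurent polynomial
`2(x − x⁻¹)(2u + 1)ⁿ` with `u = x⁻¹ + 2 + x`. Since `u` is invariant and `x − x⁻¹` changes sign
under `x ↦ x⁻¹`, this coefficient is antisymmetric, so its constant term vanishes.
-/

open PowerSeries

/-- The Laurent series `x` in `ℚ((x))`. -/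
noncomputable def xL : LaurentSeries ℚ := HahnSeries.single 1 1

/-- The rational function `(4t + (5t−1)x) / (2t + (5t−1)x + 2tx²)` expanded as an
element of `ℚ((x))[[t]] ⊆ ℚ((x))((t))`: numerator `−x + (4+5x)t`, denominator
`−x + (2+5x+2x²)t`, the latter being invertible since its constant term `−x` is a
nonzero Laurent series. -/
noncomputable def ratCT : PowerSeries (LaurentSeries ℚ) :=
  (C (-xL) + C (4 + 5 * xL) * X) *
    (C (-xL) + C (2 + 5 * xL + 2 * xL ^ 2) * X)⁻¹

namespace PowerSeries

theorem inv_C_add_C_mul_X {k : Type*} [Field k] {a : k} (ha : a ≠ 0) (b : k) :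
    (C a + C b * X)⁻¹ = mk fun n => (-b / a) ^ n / a := by
  rw [PowerSeries.inv_eq_iff_mul_eq_one (by simpa using ha)]
  ext (_ | n)
  · simp [ha]
  · rw [mul_add, ← mul_assoc, map_add, coeff_mul_C, coeff_succ_mul_X, coeff_mul_C]
    simp only [coeff_mk, coeff_one, Nat.succ_ne_zero, if_false]
    have hcancel : -b / a * a = -b := div_mul_cancel₀ _ ha
    linear_combination (-b / a) ^ n / a * hcancel

end PowerSeries

namespace LaurentPolynomial

variable (R : Type*) [CommSemiring R]

noncomputable def toLaurentSeries : R[T;T⁻¹] →ₐ[R] LaurentSeries R :=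
  AddMonoidAlgebra.lift R (LaurentSeries R) ℤ
    { toFun := fun n => HahnSeries.single n.toAdd 1
      map_one' := rfl
      map_mul' := fun m n => by simp [HahnSeries.single_mul_single] }

variable {R}

theorem toLaurentSeries_C_mul_T (a : R) (n : ℤ) :
    toLaurentSeries R (C a * T n) = HahnSeries.single n a := by
  rw [← single_eq_C_mul_T, toLaurentSeries, AddMonoidAlgebra.lift_single, Algebra.smul_def]
  simp [HahnSeries.algebraMap_apply', HahnSeries.C_apply, HahnSeries.single_mul_single]

@[simp]
theorem toLaurentSeries_T (n : ℤ) : toLaurentSeries R (T n) = HahnSeries.single n 1 := by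
  simpa using toLaurentSeries_C_mul_T (1 : R) n

@[simp]
theorem coeff_toLaurentSeries (f : R[T;T⁻¹]) (n : ℤ) :
    (toLaurentSeries R f).coeff n = f.coeff n := by
  induction f using LaurentPolynomial.induction_on' with
  | add p q hp hq => simp [hp, hq]
  | C_mul_T m a =>
    rw [toLaurentSeries_C_mul_T, ← single_eq_C_mul_T, HahnSeries.coeff_single,
      AddMonoidAlgebra.coeff_single, Finsupp.single_apply]
    by_cases h : n = m <;> simp [h, Ne.symm]

theorem coeff_zero_eq_zero_of_invert_eq_neg {R : Type*} [CommRing R] [NoZeroDivisors R]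
    [CharZero R] {f : R[T;T⁻¹]} (hf : invert f = -f) : f.coeff 0 = 0 := by
  have h := congr(($hf).coeff 0)
  rw [invert_apply, neg_zero] at h
  exact self_eq_neg.mp h

end LaurentPolynomial

open LaurentPolynomial hiding C

theorem xL_ne_zero : xL ≠ 0 :=
  HahnSeries.single_ne_zero one_ne_zero

theorem toLaurentSeries_T_one : toLaurentSeries ℚ (T 1) = xL :=
  toLaurentSeries_T 1

theorem toLaurentSeries_T_neg_one : toLaurentSeries ℚ (T (-1)) = xL⁻¹ := by
  refine eq_inv_of_mul_eq_one_left ?_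
  rw [toLaurentSeries_T, xL, HahnSeries.single_mul_single]
  simp

theorem ratCT_eq_mul_mk : ratCT = (C (-xL) + C (4 + 5 * xL) * X) *
    mk fun n => (-(2 + 5 * xL + 2 * xL ^ 2) / -xL) ^ n / -xL := by
  rw [ratCT, inv_C_add_C_mul_X (neg_ne_zero.mpr xL_ne_zero)]

theorem coeff_zero_ratCT : coeff 0 ratCT = 1 := by
  rw [ratCT_eq_mul_mk, add_mul, map_add, coeff_C_mul, mul_comm (C _) X, mul_assoc,
    coeff_zero_X_mul]
  simp [xL_ne_zero]

/-- The paper's `u = x⁻¹(1 + x)²`. -/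
noncomputable def uLaurent : ℚ[T;T⁻¹] := T (-1) + 2 + T 1

theorem coeff_succ_ratCT (n : ℕ) :
    coeff (n + 1) ratCT = toLaurentSeries ℚ (2 * (T 1 - T (-1)) * (2 * uLaurent + 1) ^ n) := by
  rw [ratCT_eq_mul_mk, add_mul, map_add, coeff_C_mul, mul_comm (C _) X, mul_assoc,
    coeff_succ_X_mul, coeff_C_mul, coeff_mk, coeff_mk, uLaurent]
  simp only [map_mul, map_pow, map_add, map_sub, map_ofNat, map_one, toLaurentSeries_T_neg_one,
    toLaurentSeries_T_one]
  have hinv : xL * xL⁻¹ = 1 := mul_inv_cancel₀ xL_ne_zero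
  have hu : -(2 + 5 * xL + 2 * xL ^ 2) / -xL = 2 * (xL⁻¹ + 2 + xL) + 1 := by
    linear_combination (5 + 2 * xL) * hinv
  rw [hu, pow_succ]
  linear_combination (2 * (xL⁻¹ + 2 + xL) + 1 - 5) * (2 * (xL⁻¹ + 2 + xL) + 1) ^ n * hinv

theorem invert_odd_mul_even (n : ℕ) :
    invert (2 * (T 1 - T (-1)) * (2 * uLaurent + 1) ^ n : ℚ[T;T⁻¹]) =
      -(2 * (T 1 - T (-1)) * (2 * uLaurent + 1) ^ n) := by
  simp only [uLaurent, map_mul, map_add, map_sub, map_pow, map_ofNat, map_one, invert_T, neg_neg]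
  ring

/-- `CT_x [(4t+(5t−1)x)/(2t+(5t−1)x+2tx²)] = 1`, coefficientwise in `t`. -/
theorem stmt12 (n : ℕ) :
    ((coeff n) ratCT).coeff 0 = if n = 0 then 1 else 0 := by
  rcases n with _ | n
  · simp [coeff_zero_ratCT]
  · rw [coeff_succ_ratCT, coeff_toLaurentSeries,
      coeff_zero_eq_zero_of_invert_eq_neg (invert_odd_mul_even n)]
    simp
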